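/- Let C be a category with pullbacks, and let η : T → S be a morphism of spans from c to c', where T is c ←α' t →β' c' and S is c ←α s →β c', given by μ : t → s with α∘μ = α' and β∘μ = β'. Then in the bicategory Span(C), the 2-cell η equals the composite ι(β')∘ι^R(α') ≅ ι(β)∘ι(μ)∘ι^R(μ)∘ι^R(α) → ι(β)∘ι^R(α) induced by the counit of the adjunction ι(μ) ⊣ ι^R(μ), where ι(γ) denotes the span with left leg identity and right leg γ, and ι^R(γ) the reversed span. -/

import Mathlib

open CategoryTheory CategoryTheory.Limits

universe v u

attribute [simp] pullback.lift_fst pullback.lift_snd pullback.lift_fst_assoc pullback.lift_snd_assoc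

variable (C : Type u) [Category.{v} C]

/-- A span from `c` to `c'`: an apex with two legs. -/
structure SpanC (c c' : C) : Type max u v where
  apex : C
  l : apex ⟶ c
  r : apex ⟶ c'

variable {C}

/-- Morphisms of spans are maps of apexes commuting with the legs. -/
instance SpanC.category {c c' : C} : Category (SpanC C c c') where
  Hom S T := {φ : S.apex ⟶ T.apex // φ ≫ T.l = S.l ∧ φ ≫ T.r = S.r}
  id S := ⟨𝟙 _, Category.id_comp _, Category.id_comp _⟩
  comp φ ψ := ⟨φ.1 ≫ ψ.1, by rw [Category.assoc, ψ.2.1, φ.2.1], by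
    rw [Category.assoc, ψ.2.2, φ.2.2]⟩
  id_comp φ := Subtype.ext (Category.id_comp _)
  comp_id φ := Subtype.ext (Category.comp_id _)
  assoc φ ψ ξ := Subtype.ext (Category.assoc _ _ _)

namespace SpanC

@[ext]
lemma hom_ext {c c' : C} {S T : SpanC C c c'} (φ ψ : S ⟶ T) (h : φ.1 = ψ.1) : φ = ψ :=
  Subtype.ext h

@[simp]
lemma comp_val {c c' : C} {S T U : SpanC C c c'} (φ : S ⟶ T) (ψ : T ⟶ U) :
    (φ ≫ ψ).1 = φ.1 ≫ ψ.1 := rfl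

@[simp]
lemma id_val {c c' : C} (S : SpanC C c c') : (𝟙 S : S ⟶ S).1 = 𝟙 S.apex := rfl

@[simp]
lemma w_l {c c' : C} {S T : SpanC C c c'} (φ : S ⟶ T) : φ.1 ≫ T.l = S.l := φ.2.1

@[simp]
lemma w_r {c c' : C} {S T : SpanC C c c'} (φ : S ⟶ T) : φ.1 ≫ T.r = S.r := φ.2.2

/-- The identity span. -/
def idSpan (c : C) : SpanC C c c := ⟨c, 𝟙 c, 𝟙 c⟩

/-- The span `a ← a → b` with identity left leg, image of `f` under `ι : C → Span(C)`. -/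
def iota {a b : C} (f : a ⟶ b) : SpanC C a b := ⟨a, 𝟙 a, f⟩

/-- The reversed span `b ← a → a`, image of `f` under `ι^R : Cᵒᵖ → Span(C)`. -/
def iotaR {a b : C} (f : a ⟶ b) : SpanC C b a := ⟨a, f, 𝟙 a⟩

attribute [reducible] idSpan iota iotaR

variable [HasPullbacks C]

/-- Composition of spans, by pullback. -/
noncomputable def hcomp {c c' c'' : C} (S : SpanC C c c') (T : SpanC C c' c'') :
    SpanC C c c'' :=
  ⟨pullback S.r T.l, pullback.fst S.r T.l ≫ S.l, pullback.snd S.r T.l ≫ T.r⟩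

@[simp] lemma hcomp_apex {c c' c'' : C} (S : SpanC C c c') (T : SpanC C c' c'') :
    (hcomp S T).apex = pullback S.r T.l := rfl

@[simp] lemma hcomp_l {c c' c'' : C} (S : SpanC C c c') (T : SpanC C c' c'') :
    (hcomp S T).l = pullback.fst S.r T.l ≫ S.l := rfl

@[simp] lemma hcomp_r {c c' c'' : C} (S : SpanC C c c') (T : SpanC C c' c'') :
    (hcomp S T).r = pullback.snd S.r T.l ≫ T.r := rfl

/-- Horizontal composition of 2-cells. -/
noncomputable def hcompMap {c c' c'' : C} {S S' : SpanC C c c'} {T T' : SpanC C c' c''}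
    (φ : S ⟶ S') (ψ : T ⟶ T') : hcomp S T ⟶ hcomp S' T' :=
  ⟨pullback.map S.r T.l S'.r T'.l φ.1 ψ.1 (𝟙 c') (by simp) (by simp),
    by simp, by simp⟩

@[simp]
lemma hcompMap_val {c c' c'' : C} {S S' : SpanC C c c'} {T T' : SpanC C c' c''}
    (φ : S ⟶ S') (ψ : T ⟶ T') :
    (hcompMap φ ψ).1 = pullback.map S.r T.l S'.r T'.l φ.1 ψ.1 (𝟙 c') (by simp) (by simp) :=
  rfl

/-- Left whiskering. -/
noncomputable def whiskL {c c' c'' : C} (S : SpanC C c c') {T T' : SpanC C c' c''}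
    (ψ : T ⟶ T') : hcomp S T ⟶ hcomp S T' :=
  hcompMap (𝟙 S) ψ

/-- Right whiskering. -/
noncomputable def whiskR {c c' c'' : C} {S S' : SpanC C c c'} (φ : S ⟶ S')
    (T : SpanC C c' c'') : hcomp S T ⟶ hcomp S' T :=
  hcompMap φ (𝟙 T)

/-- A span morphism with invertible underlying morphism is an isomorphism of spans. -/
noncomputable def isoOfIsIso {c c' : C} {S T : SpanC C c c'} (φ : S ⟶ T) [IsIso φ.1] :
    S ≅ T where
  hom := φ
  inv := ⟨inv φ.1, by rw [IsIso.inv_comp_eq]; exact φ.2.1.symm, by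
    rw [IsIso.inv_comp_eq]; exact φ.2.2.symm⟩
  hom_inv_id := by ext; simp
  inv_hom_id := by ext; simp

/-- Horizontal composition of invertible 2-cells. -/
noncomputable def hcompIso {c c' c'' : C} {S S' : SpanC C c c'} {T T' : SpanC C c' c''}
    (e₁ : S ≅ S') (e₂ : T ≅ T') : hcomp S T ≅ hcomp S' T' :=
  haveI : IsIso e₁.hom.1 := ⟨e₁.inv.1, congrArg Subtype.val e₁.hom_inv_id,
    congrArg Subtype.val e₁.inv_hom_id⟩
  haveI : IsIso e₂.hom.1 := ⟨e₂.inv.1, congrArg Subtype.val e₂.hom_inv_id,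
    congrArg Subtype.val e₂.inv_hom_id⟩
  haveI : IsIso (hcompMap e₁.hom e₂.hom).1 := by rw [hcompMap_val]; exact pullback.map_isIso _ _ _ _ _ _ _ _ _
  isoOfIsIso (hcompMap e₁.hom e₂.hom)

/-- The left unitor. -/
noncomputable def unitorL {c c' : C} (S : SpanC C c c') : hcomp (idSpan c) S ≅ S where
  hom := ⟨pullback.snd (idSpan c).r S.l, by
      simpa [idSpan] using (pullback.condition (f := (idSpan c).r) (g := S.l)).symm, by simp [idSpan]⟩
  inv := ⟨pullback.lift (f := (idSpan c).r) (g := S.l) S.l (𝟙 _) (by simp [idSpan]),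
    by simp [idSpan], by simp [idSpan]⟩
  hom_inv_id := by
    ext
    rw [comp_val]
    apply pullback.hom_ext <;> simp [idSpan, ← pullback.condition]
  inv_hom_id := by ext; rw [comp_val]; simp

/-- The right unitor. -/
noncomputable def unitorR {c c' : C} (S : SpanC C c c') : hcomp S (idSpan c') ≅ S where
  hom := ⟨pullback.fst S.r (idSpan c').l, by simp [idSpan], by
      simpa [idSpan] using pullback.condition (f := S.r) (g := (idSpan c').l)⟩
  inv := ⟨pullback.lift (f := S.r) (g := (idSpan c').l) (𝟙 _) S.r (by simp [idSpan]),
    by simp [idSpan], by simp [idSpan]⟩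
  hom_inv_id := by
    ext
    rw [comp_val]
    apply pullback.hom_ext <;> simp [idSpan, pullback.condition]
  inv_hom_id := by ext; rw [comp_val]; simp

/-- The associator. -/
noncomputable def assocIso {c c' c'' c''' : C} (S : SpanC C c c') (T : SpanC C c' c'')
    (U : SpanC C c'' c''') : hcomp (hcomp S T) U ≅ hcomp S (hcomp T U) where
  hom := ⟨(pullbackAssoc S.r T.l T.r U.l).hom, by simp, by simp⟩
  inv := ⟨(pullbackAssoc S.r T.l T.r U.l).inv, by simp, by simp⟩
  hom_inv_id := by ext; rw [comp_val]; simp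
  inv_hom_id := by ext; rw [comp_val]; simp

/-- The triangle identities exhibiting `f ⊣ g` in the bicategory of spans, with unit `η`
and counit `ε`. -/
noncomputable def IsSpanAdjunction {c c' : C} (f : SpanC C c c') (g : SpanC C c' c)
    (η : idSpan c ⟶ hcomp f g) (ε : hcomp g f ⟶ idSpan c') : Prop :=
  ((unitorL f).inv ≫ whiskR η f ≫ (assocIso f g f).hom ≫ whiskL f ε ≫ (unitorR f).hom
      = 𝟙 f) ∧
  ((unitorR g).inv ≫ whiskL g η ≫ (assocIso g f g).inv ≫ whiskR ε g ≫ (unitorL g).hom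
      = 𝟙 g)

end SpanC

namespace SpanC

variable {C : Type u} [Category.{v} C] [HasPullbacks C]

/-- The unit of the adjunction `ι(α) ⊣ ι^R(α)`: the diagonal map `c → c ×_{c'} c` as a
2-cell from the identity span of `c` to the composite `ι(α) ≫ ι^R(α)`. -/
noncomputable def spanUnit {c c' : C} (α : c ⟶ c') : idSpan c ⟶ hcomp (iota α) (iotaR α) :=
  ⟨pullback.lift (f := (iota α).r) (g := (iotaR α).l) (𝟙 c) (𝟙 c) rfl,
    by simp [iota, iotaR, idSpan], by simp [iota, iotaR, idSpan]⟩

/-- The counit of the adjunction `ι(α) ⊣ ι^R(α)`: the map `α : c → c'` as a 2-cell from the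
composite `ι^R(α) ≫ ι(α)` to the identity span of `c'`. -/
noncomputable def spanCounit {c c' : C} (α : c ⟶ c') :
    hcomp (iotaR α) (iota α) ⟶ idSpan c' :=
  ⟨pullback.fst (iotaR α).r (iota α).l ≫ α, by simp [iota, iotaR, idSpan], by
    have hc := pullback.condition (f := (iotaR α).r) (g := (iota α).l)
    simp only [iota, iotaR, Category.comp_id] at hc
    simp [iota, iotaR, idSpan, hc]⟩

end SpanC

namespace SpanC

variable {C : Type u} [Category.{v} C] [HasPullbacks C]

/-- Every span factors canonically as `ι(right leg) ∘ ι^R(left leg)`. -/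
noncomputable def spanDecomp {c c' : C} (S : SpanC C c c') :
    S ≅ hcomp (iotaR S.l) (iota S.r) where
  hom := ⟨pullback.lift (f := (iotaR S.l).r) (g := (iota S.r).l) (𝟙 _) (𝟙 _) rfl,
    by simp [iota, iotaR], by simp [iota, iotaR]⟩
  inv := ⟨pullback.fst (iotaR S.l).r (iota S.r).l, by simp [iota, iotaR], by
    have hc := pullback.condition (f := (iotaR S.l).r) (g := (iota S.r).l)
    simp only [iota, iotaR, Category.comp_id] at hc
    simp [iota, iotaR, hc]⟩
  hom_inv_id := by ext; rw [comp_val]; simp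
  inv_hom_id := by
    ext
    rw [comp_val]
    apply pullback.hom_ext
    · simp
    · have hc := pullback.condition (f := (iotaR S.l).r) (g := (iota S.r).l)
      simp only [iota, iotaR, Category.comp_id] at hc
      simp [iota, iotaR, hc]

/-- Contravariant functoriality of `ι^R` up to canonical isomorphism:
`ι^R(μ ≫ α) ≅ ι^R(α) ∘ ι^R(μ)`. -/
noncomputable def iotaRCompIso {c s t : C} (α : s ⟶ c) (μ : t ⟶ s) {α' : t ⟶ c}
    (hα : μ ≫ α = α') : iotaR α' ≅ hcomp (iotaR α) (iotaR μ) where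
  hom := ⟨pullback.lift (f := (iotaR α).r) (g := (iotaR μ).l) μ (𝟙 t) (by simp [iotaR]),
    by simp [iota, iotaR, ← hα], by simp [iota, iotaR]⟩
  inv := ⟨pullback.snd (iotaR α).r (iotaR μ).l, by
      have hc := pullback.condition (f := (iotaR α).r) (g := (iotaR μ).l)
      simp only [iotaR, Category.comp_id] at hc
      simp [iotaR, ← hα]
      rw [← Category.assoc, ← hc], by simp [iotaR]⟩
  hom_inv_id := by ext; rw [comp_val]; simp [iotaR]
  inv_hom_id := by
    ext
    rw [comp_val]
    apply pullback.hom_ext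
    · have hc := pullback.condition (f := (iotaR α).r) (g := (iotaR μ).l)
      simp only [iotaR, Category.comp_id] at hc
      simp [iotaR, ← hc]
    · simp [iotaR]

/-- Covariant functoriality of `ι` up to canonical isomorphism:
`ι(μ ≫ β) ≅ ι(β) ∘ ι(μ)`. -/
noncomputable def iotaCompIso {c' s t : C} (β : s ⟶ c') (μ : t ⟶ s) {β' : t ⟶ c'}
    (hβ : μ ≫ β = β') : iota β' ≅ hcomp (iota μ) (iota β) where
  hom := ⟨pullback.lift (f := (iota μ).r) (g := (iota β).l) (𝟙 t) μ (by simp [iota]),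
    by simp [iota], by simp [iota, ← hβ]⟩
  inv := ⟨pullback.fst (iota μ).r (iota β).l, by simp [iota], by
      have hc := pullback.condition (f := (iota μ).r) (g := (iota β).l)
      simp only [iota, Category.comp_id] at hc
      simp [iota, ← hβ]
      rw [← Category.assoc, hc]⟩
  hom_inv_id := by ext; rw [comp_val]; simp [iota]
  inv_hom_id := by
    ext
    rw [comp_val]
    apply pullback.hom_ext
    · simp [iota]
    · have hc := pullback.condition (f := (iota μ).r) (g := (iota β).l)
      simp only [iota, Category.comp_id] at hc
      simp [iota, hc]

/-- The 2-cell `ι(β') ∘ ι^R(α') ≅ ι(β) ∘ ι(μ) ∘ ι^R(μ) ∘ ι^R(α) ⟶ ι(β) ∘ ι^R(α)` induced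
by the counit of the adjunction `ι(μ) ⊣ ι^R(μ)`. -/
noncomputable def counitPasting {c c' s t : C} (α : s ⟶ c) (β : s ⟶ c') (μ : t ⟶ s)
    {α' : t ⟶ c} {β' : t ⟶ c'} (hα : μ ≫ α = α') (hβ : μ ≫ β = β') :
    hcomp (iotaR α') (iota β') ⟶ hcomp (iotaR α) (iota β) :=
  (hcompIso (iotaRCompIso α μ hα) (iotaCompIso β μ hβ)).hom ≫
    (assocIso (iotaR α) (iotaR μ) (hcomp (iota μ) (iota β))).hom ≫
    whiskL (iotaR α) (assocIso (iotaR μ) (iota μ) (iota β)).inv ≫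
    whiskL (iotaR α) (whiskR (spanCounit μ) (iota β)) ≫
    whiskL (iotaR α) (unitorL (iota β)).hom

end SpanC

namespace SpanC

variable {C : Type u} [Category.{v} C] [HasPullbacks C]

lemma comp_val_assoc' {c c' : C} {S T U : SpanC C c c'} (φ : S ⟶ T) (ψ : T ⟶ U) {Z : C}
    (h : U.apex ⟶ Z) : (φ ≫ ψ).1 ≫ h = φ.1 ≫ ψ.1 ≫ h :=
  Category.assoc _ _ _

lemma hcompIso_hom_fst' {c c' c'' : C} {S S' : SpanC C c c'} {T T' : SpanC C c' c''}
    (e₁ : S ≅ S') (e₂ : T ≅ T') :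
    (hcompIso e₁ e₂).hom.1 ≫ pullback.fst S'.r T'.l = pullback.fst S.r T.l ≫ e₁.hom.1 :=
  pullback.lift_fst _ _ _

lemma hcompIso_hom_fst_assoc' {c c' c'' : C} {S S' : SpanC C c c'} {T T' : SpanC C c' c''}
    (e₁ : S ≅ S') (e₂ : T ≅ T') {Z : C} (h : S'.apex ⟶ Z) :
    (hcompIso e₁ e₂).hom.1 ≫ pullback.fst S'.r T'.l ≫ h = pullback.fst S.r T.l ≫ e₁.hom.1 ≫ h :=
  (Category.assoc _ _ _).symm.trans ((congrArg (· ≫ h) (hcompIso_hom_fst' e₁ e₂)).trans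
    (Category.assoc _ _ _))

lemma whiskL_fst' {c c' c'' : C} (S : SpanC C c c') {T T' : SpanC C c' c''} (ψ : T ⟶ T') :
    (whiskL S ψ).1 ≫ pullback.fst S.r T'.l = pullback.fst S.r T.l :=
  (pullback.lift_fst _ _ _).trans (Category.comp_id _)

lemma assocIso_hom_fst' {c c' c'' c''' : C} (S : SpanC C c c') (T : SpanC C c' c'')
    (U : SpanC C c'' c''') :
    (assocIso S T U).hom.1 ≫ pullback.fst S.r (hcomp T U).l =
      pullback.fst (hcomp S T).r U.l ≫ pullback.fst S.r T.l :=
  pullbackAssoc_hom_fst _ _ _ _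

lemma iotaRCompIso_hom_fst' {c s t : C} (α : s ⟶ c) (μ : t ⟶ s) {α' : t ⟶ c}
    (hα : μ ≫ α = α') :
    (iotaRCompIso α μ hα).hom.1 ≫ pullback.fst (iotaR α).r (iotaR μ).l = μ :=
  pullback.lift_fst _ _ _

end SpanC

open SpanC in
/-- A 2-cell of spans `η : (c ←α' t →β' c') ⟶ (c ←α s →β c')`, given by `μ : t ⟶ s` with
`μ ≫ α = α'` and `μ ≫ β = β'`, coincides, under the canonical decompositions
`T ≅ ι(β') ∘ ι^R(α')` and `S ≅ ι(β) ∘ ι^R(α)`, with the composite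
`ι(β') ∘ ι^R(α') ≅ ι(β) ∘ ι(μ) ∘ ι^R(μ) ∘ ι^R(α) ⟶ ι(β) ∘ ι^R(α)` induced by the counit
of the adjunction `ι(μ) ⊣ ι^R(μ)`. -/
theorem span_two_cell_eq_counit_pasting {C : Type u} [Category.{v} C] [HasPullbacks C]
    {c c' s t : C} (α : s ⟶ c) (β : s ⟶ c') (μ : t ⟶ s) (α' : t ⟶ c) (β' : t ⟶ c')
    (hα : μ ≫ α = α') (hβ : μ ≫ β = β') :
    (⟨μ, hα, hβ⟩ : (⟨t, α', β'⟩ : SpanC C c c') ⟶ (⟨s, α, β⟩ : SpanC C c c')) =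
      (spanDecomp (⟨t, α', β'⟩ : SpanC C c c')).hom ≫ counitPasting α β μ hα hβ ≫
        (spanDecomp (⟨s, α, β⟩ : SpanC C c c')).inv := by
  have h1 : (counitPasting α β μ hα hβ).1 ≫ pullback.fst (iotaR α).r (iota β).l =
      pullback.fst (iotaR α').r (iota β').l ≫ μ := by
    rw [counitPasting]
    erw [comp_val_assoc', comp_val_assoc', comp_val_assoc', comp_val_assoc', whiskL_fst', whiskL_fst',
      whiskL_fst', assocIso_hom_fst', hcompIso_hom_fst_assoc', iotaRCompIso_hom_fst']
  ext
  rw [comp_val, comp_val]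
  erw [h1]
  exact ((pullback.lift_fst_assoc (f := (iotaR α').r) (g := (iota β').l) (𝟙 t) (𝟙 t) rfl μ).trans
    (Category.id_comp μ)).symm
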